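/- There exists a twice differentiable function V : ℝ → ℝ satisfying V''(s) - 3V'(s) = R(V(s)) for all s ∈ ℝ, with V(s) < -1 and V'(s) < 0 for all s ∈ ℝ, V(s) → -1 as s → -∞, and V(s) → -∞ as s → +∞. -/

import Mathlib

/-!
Phase-plane reduction: a solution with `V' = W(V)` for a negative `W` on `(-∞, -1)` turns the
equation into `W W' = 3W + R`, i.e. `W(v)² / 2 = ∫_v^{-1} -(3W + R)` with `W(-1) = 0`.
The map `f ↦ -√(2 ∫_v^{-1} -(3f + R))` is monotone, and because `R(v) ≥ 4(v + 1)` and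
`4² = 3·4 + 4`, the line `4(v + 1)` lies below its image. The iterates from this line increase
to a fixed point `W`, which is negative since `R < 0` and differentiable by the fundamental
theorem of calculus. The bound `W(v) ≥ 4(v + 1)` makes `∫ dv / W` diverge logarithmically at
both ends of `(-∞, -1)`, so the flow of `V' = W(V)` exists for all times and sweeps out
`(-∞, -1)`; then `V'' = W'(V) W(V) = 3V' + R(V)`.

The bound on `R` is `q + (1 - e^q) + (1 - e^q)² / 2 ≤ 0` for `q ≤ 0`, and `R` is continuous
because `Q`, a monotone map onto an interval, is.
-/

open Real Filter Set Topology MeasureTheory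

theorem strictMonoOn_sub_exp : StrictMonoOn (fun q => q - exp q) (Iic 0) :=
  strictMonoOn_of_hasDerivWithinAt_pos (convex_Iic 0) (by fun_prop)
    (fun q _ => ((hasDerivAt_id q).sub (hasDerivAt_exp q)).hasDerivWithinAt)
    fun q hq => by
      rw [interior_Iic] at hq
      simpa using exp_lt_one_iff.2 hq

theorem add_one_sub_exp_add_sq_nonpos {q : ℝ} (hq : q ≤ 0) :
    q + (1 - exp q) + (1 - exp q) ^ 2 / 2 ≤ 0 := by
  have hderiv (q : ℝ) : HasDerivAt (fun q => q + (1 - exp q) + (1 - exp q) ^ 2 / 2)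
      ((1 - exp q) ^ 2) q := by
    have h := (hasDerivAt_exp q).const_sub 1
    refine (((hasDerivAt_id' q).add h).add ((h.pow 2).div_const 2)).congr_deriv ?_
    ring
  simpa using monotone_of_hasDerivAt_nonneg hderiv (fun q => sq_nonneg _) hq

section

variable {Q R : ℝ → ℝ} (hQ : ∀ v : ℝ, v < -1 → Q v < 0 ∧ Q v - Real.exp (Q v) = v)
  (hR : ∀ v : ℝ, R v = if v < -1 then -2 * (1 - Real.exp (Q v)) ^ 2 else 4 * (v + 1))
include hQ

theorem strictMonoOn_Q : StrictMonoOn Q (Iio (-1)) := fun v hv w hw hvw =>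
  lt_of_not_ge fun hle => by
    have := (strictMonoOn_sub_exp.le_iff_le (hQ w hw).1.le (hQ v hv).1.le).2 hle
    simp only [(hQ v hv).2, (hQ w hw).2] at this
    linarith

theorem Q_image_Iio : Q '' Iio (-1) = Iio 0 := by
  refine Subset.antisymm (by rintro _ ⟨v, hv, rfl⟩; exact (hQ v hv).1) fun q hq => ?_
  have hv : q - exp q < -1 := by
    simpa using strictMonoOn_sub_exp (mem_Iic.2 hq.le) self_mem_Iic hq
  exact ⟨q - exp q, hv, strictMonoOn_sub_exp.injOn (hQ _ hv).1.le (mem_Iic.2 hq.le) (hQ _ hv).2⟩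

theorem continuousAt_Q {v : ℝ} (hv : v < -1) : ContinuousAt Q v :=
  (strictMonoOn_Q hQ).continuousAt_of_image_mem_nhds (Iio_mem_nhds hv)
    (by rw [Q_image_Iio hQ]; exact Iio_mem_nhds (hQ v hv).1)

include hR

theorem R_neg {v : ℝ} (hv : v < -1) : R v < 0 := by
  have : 0 < 1 - exp (Q v) := sub_pos.2 (exp_lt_one_iff.2 (hQ v hv).1)
  rw [hR, if_pos hv]
  nlinarith

theorem four_mul_add_one_le_R {v : ℝ} (hv : v ≤ -1) : 4 * (v + 1) ≤ R v := by
  rcases hv.lt_or_eq with hv | rfl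
  · have := add_one_sub_exp_add_sq_nonpos (hQ v hv).1.le
    rw [hR, if_pos hv]
    linarith [(hQ v hv).2]
  · simp [hR]

theorem abs_R_le (v : ℝ) : |R v| ≤ 4 * |v + 1| := by
  rcases lt_or_ge v (-1) with hv | hv
  · rw [abs_of_neg (R_neg hQ hR hv), abs_of_neg (by linarith)]
    linarith [four_mul_add_one_le_R hQ hR hv.le]
  · rw [hR, if_neg hv.not_gt, abs_mul, abs_of_pos four_pos]

theorem continuous_R : Continuous R := continuous_iff_continuousAt.2 fun v => by
  rcases lt_trichotomy v (-1) with hv | rfl | hv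
  · have := continuousAt_Q hQ hv
    refine ContinuousAt.congr (f := fun u => -2 * (1 - exp (Q u)) ^ 2) (by fun_prop) ?_
    filter_upwards [Iio_mem_nhds hv] with u hu
    rw [hR, if_pos (mem_Iio.1 hu)]
  · refine continuousAt_of_locally_lipschitz one_pos 4 fun u _ => ?_
    simpa [dist_eq, hR (-1)] using abs_R_le hQ hR u
  · refine ContinuousAt.congr (f := fun u => 4 * (u + 1)) (by fun_prop) ?_
    filter_upwards [Ioi_mem_nhds hv] with u hu
    rw [hR, if_neg (not_lt.2 (mem_Ioi.1 hu).le)]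

end

theorem exists_global_solution_of_pos_of_le {F : ℝ → ℝ} {c : ℝ} (hF : Continuous F)
    (hF_pos : ∀ u, 0 < F u) (hF_le : ∀ u, F u ≤ c) :
    ∃ U : ℝ → ℝ, (∀ t, HasDerivAt U (F (U t)) t) ∧
      Tendsto U atBot atBot ∧ Tendsto U atTop atTop := by
  have hc : 0 < c := (hF_pos 0).trans_le (hF_le 0)
  set T : ℝ → ℝ := fun u => ∫ x in (0 : ℝ)..u, (F x)⁻¹
  have hT (u : ℝ) : HasDerivAt T (F u)⁻¹ u :=
    ((hF.inv₀ fun x => (hF_pos x).ne').integral_hasStrictDerivAt 0 u).hasDerivAt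
  have hT_mono : StrictMono T := strictMono_of_hasDerivAt_pos hT fun u => inv_pos.2 (hF_pos u)
  have hT_sub : Monotone fun u => T u - u / c :=
    monotone_of_hasDerivAt_nonneg (fun u => (hT u).sub ((hasDerivAt_id u).div_const c))
      fun u => by simpa using inv_anti₀ (hF_pos u) (hF_le u)
  have hT0 : T 0 = 0 := intervalIntegral.integral_same
  have h_top : Tendsto T atTop atTop := by
    refine tendsto_atTop_mono' _ ?_ (tendsto_id.atTop_div_const hc)
    filter_upwards [eventually_ge_atTop 0] with u hu
    simpa [hT0] using hT_sub hu
  have h_bot : Tendsto T atBot atBot := by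
    refine tendsto_atBot_mono' _ ?_ (tendsto_id.atBot_div_const hc)
    filter_upwards [eventually_le_atBot 0] with u hu
    simpa [hT0] using hT_sub hu
  set e := StrictMono.orderIsoOfSurjective T hT_mono
    ((continuous_iff_continuousAt.2 fun u => (hT u).continuousAt).surjective h_top h_bot)
  refine ⟨e.symm, fun t => ?_, e.symm.tendsto_atBot, e.symm.tendsto_atTop⟩
  simpa using (hT (e.symm t)).of_local_left_inverse e.symm.continuous.continuousAt
    (inv_ne_zero (hF_pos _).ne') (Eventually.of_forall e.apply_symm_apply)

theorem exists_solution_of_neg_of_le_mul_sub {W : ℝ → ℝ} {a c : ℝ}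
    (hW : ContinuousOn W (Iio a)) (hW_neg : ∀ v < a, W v < 0)
    (hW_ge : ∀ v < a, c * (v - a) ≤ W v) :
    ∃ V : ℝ → ℝ, (∀ t, V t < a) ∧ (∀ t, HasDerivAt V (W (V t)) t) ∧
      Tendsto V atBot (𝓝 a) ∧ Tendsto V atTop atBot := by
  have hlt (u : ℝ) : a - exp u < a := sub_lt_self a (exp_pos u)
  -- `V = a - exp U` turns `V' = W(V)` into `U' = F(U)` with `0 < F ≤ c`
  obtain ⟨U, hU, hU_bot, hU_top⟩ := exists_global_solution_of_pos_of_le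
    (F := fun u => -W (a - exp u) / exp u) (c := c)
    ((hW.comp_continuous (by fun_prop) hlt).neg.div (by fun_prop) fun u => (exp_pos u).ne')
    (fun u => div_pos (neg_pos.2 (hW_neg _ (hlt u))) (exp_pos u))
    (fun u => by
      rw [div_le_iff₀ (exp_pos u)]
      linarith [hW_ge _ (hlt u)])
  refine ⟨fun t => a - exp (U t), fun t => hlt _, fun t => ?_, ?_, ?_⟩
  · refine ((hU t).exp.const_sub a).congr_deriv ?_
    field_simp [(exp_pos (U t)).ne']
  · simpa using (tendsto_exp_atBot.comp hU_bot).const_sub a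
  · exact tendsto_atBot_add_const_left _ a
      (tendsto_neg_atTop_atBot.comp (tendsto_exp_atTop.comp hU_top))

theorem continuous_neg_sqrt_integral_min {g : ℝ → ℝ}
    (hg : ∀ a b, IntervalIntegrable g volume a b) :
    Continuous fun v => -√(2 * ∫ z in min v (-1)..-1, g z) := by
  have hint : Continuous fun a => ∫ z in a..-1, g z := by
    rw [show (fun a => ∫ z in a..-1, g z) = fun a => -∫ z in (-1)..a, g z from
      funext fun a => intervalIntegral.integral_symm (-1) a]
    exact (intervalIntegral.continuous_primitive hg (-1)).neg
  exact (continuous_sqrt.comp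
    (continuous_const.mul (hint.comp (continuous_id.min continuous_const)))).neg

/-- Fixed points are the phase profiles `W` with `W(v)² / 2 = ∫_v^{-1} -(3W + R)`. Clamping `v`
at `-1` makes the map monotone on all of `C(ℝ, ℝ)`. -/
noncomputable def phaseMap (R f : C(ℝ, ℝ)) : C(ℝ, ℝ) where
  toFun v := -√(2 * ∫ z in min v (-1)..-1, -(3 * f z + R z))
  continuous_toFun := continuous_neg_sqrt_integral_min fun a b =>
    (by fun_prop : Continuous fun z => -(3 * f z + R z)).intervalIntegrable a b

def phaseSeed : C(ℝ, ℝ) := ⟨fun v => 4 * (min v (-1) + 1), by fun_prop⟩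

namespace phaseMap

variable (R : C(ℝ, ℝ))

theorem apply_nonpos (f : C(ℝ, ℝ)) (v : ℝ) : phaseMap R f v ≤ 0 :=
  neg_nonpos.2 (sqrt_nonneg _)

theorem apply_of_le (f : C(ℝ, ℝ)) {v : ℝ} (hv : v ≤ -1) :
    phaseMap R f v = -√(2 * ∫ z in v..-1, -(3 * f z + R z)) := by
  simp [phaseMap, min_eq_left hv]

theorem monotone : Monotone (phaseMap R) := fun f g hfg v => by
  refine neg_le_neg (sqrt_le_sqrt (mul_le_mul_of_nonneg_left ?_ zero_le_two))
  refine intervalIntegral.integral_mono_on (min_le_right _ _)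
    (Continuous.intervalIntegrable (by fun_prop) _ _)
    (Continuous.intervalIntegrable (by fun_prop) _ _) fun z _ => ?_
  have : f z ≤ g z := hfg z
  linarith

theorem seed_le (hR : ∀ v ≤ -1, 4 * (v + 1) ≤ R v) : phaseSeed ≤ phaseMap R phaseSeed := by
  intro v
  set m := min v (-1)
  have hm : m ≤ -1 := min_le_right _ _
  have hI : ∫ z in m..-1, -(3 * phaseSeed z + R z) ≤ ∫ z in m..-1, -16 * (z + 1) := by
    refine intervalIntegral.integral_mono_on hm
      (Continuous.intervalIntegrable (by fun_prop) _ _)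
      (Continuous.intervalIntegrable (by fun_prop) _ _) fun z hz => ?_
    have : phaseSeed z = 4 * (z + 1) := by simp [phaseSeed, min_eq_left hz.2]
    linarith [hR z hz.2]
  have h16 : ∫ z in m..-1, -16 * (z + 1) = 8 * (m + 1) ^ 2 := by
    rw [intervalIntegral.integral_const_mul,
      intervalIntegral.integral_comp_add_right (fun x => x), integral_id]
    ring
  have : √(2 * ∫ z in m..-1, -(3 * phaseSeed z + R z)) ≤ -(4 * (m + 1)) := by
    rw [sqrt_le_left (by linarith)]
    nlinarith
  change 4 * (m + 1) ≤ -√(2 * ∫ z in m..-1, -(3 * phaseSeed z + R z))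
  linarith

variable {R} (hR : ∀ v < -1, R v < 0) {f : C(ℝ, ℝ)} (hf : f ≤ 0)
include hR hf

theorem apply_neg {v : ℝ} (hv : v < -1) : phaseMap R f v < 0 := by
  rw [apply_of_le R f hv.le, neg_lt_zero, sqrt_pos]
  refine mul_pos two_pos (intervalIntegral.intervalIntegral_pos_of_pos_on
    (Continuous.intervalIntegrable (by fun_prop) _ _) (fun z hz => ?_) hv)
  have : f z ≤ 0 := hf z
  linarith [hR z hz.2]

theorem hasDerivAt {v : ℝ} (hv : v < -1) :
    HasDerivAt (phaseMap R f) ((3 * f v + R v) / phaseMap R f v) v := by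
  set I := fun u => ∫ z in u..-1, -(3 * f z + R z)
  have hg : Continuous fun z => -(3 * f z + R z) := by fun_prop
  have hI : HasDerivAt I (3 * f v + R v) v := by
    simpa only [neg_neg] using (intervalIntegral.integral_hasStrictDerivAt_left
      (hg.intervalIntegrable v (-1)) (hg.stronglyMeasurableAtFilter _ _)
      hg.continuousAt).hasDerivAt
  have hP : phaseMap R f v = -√(2 * I v) := apply_of_le R f hv.le
  have hI_pos : 0 < 2 * I v := sqrt_pos.1 (by linarith [apply_neg hR hf hv])
  have heq : (fun u => -√(2 * I u)) =ᶠ[𝓝 v] phaseMap R f := by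
    filter_upwards [Iic_mem_nhds hv] with u hu
    exact (apply_of_le R f hu).symm
  refine (((hI.const_mul 2).sqrt hI_pos.ne').neg.congr_of_eventuallyEq heq.symm).congr_deriv ?_
  rw [hP]
  field_simp

end phaseMap

noncomputable def phaseProfile (R : C(ℝ, ℝ)) (v : ℝ) : ℝ :=
  ⨆ n, (phaseMap R)^[n] phaseSeed v

namespace phaseProfile

variable {R : C(ℝ, ℝ)} (hR : ∀ v ≤ -1, 4 * (v + 1) ≤ R v)
include hR

theorem monotone_iterate : Monotone fun n => (phaseMap R)^[n] phaseSeed :=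
  (phaseMap.monotone R).monotone_iterate_of_le_map (phaseMap.seed_le R hR)

theorem iterate_nonpos (n : ℕ) (v : ℝ) : (phaseMap R)^[n] phaseSeed v ≤ 0 :=
  calc (phaseMap R)^[n] phaseSeed v ≤ (phaseMap R)^[n + 1] phaseSeed v :=
        monotone_iterate hR n.le_succ v
    _ = phaseMap R ((phaseMap R)^[n] phaseSeed) v := by rw [Function.iterate_succ_apply']
    _ ≤ 0 := phaseMap.apply_nonpos R _ v

theorem tendsto_iterate (v : ℝ) :
    Tendsto (fun n => (phaseMap R)^[n] phaseSeed v) atTop (𝓝 (phaseProfile R v)) :=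
  tendsto_atTop_ciSup (fun _ _ h => monotone_iterate hR h v)
    ⟨0, forall_mem_range.2 fun n => iterate_nonpos hR n v⟩

theorem seed_le_apply (v : ℝ) : phaseSeed v ≤ phaseProfile R v :=
  ge_of_tendsto' (tendsto_iterate hR v) fun n => monotone_iterate hR n.zero_le v

theorem apply_nonpos (v : ℝ) : phaseProfile R v ≤ 0 :=
  le_of_tendsto' (tendsto_iterate hR v) fun n => iterate_nonpos hR n v

theorem intervalIntegrable (a b : ℝ) : IntervalIntegrable (phaseProfile R) volume a b :=
  (phaseSeed.continuous.intervalIntegrable a b).mono_fun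
    (Measurable.iSup fun n =>
      ((phaseMap R)^[n] phaseSeed).continuous.measurable).aestronglyMeasurable
    (Eventually.of_forall fun v => by
      simpa using abs_le_abs_of_nonpos (apply_nonpos hR v) (seed_le_apply hR v))

theorem eq_neg_sqrt_integral (v : ℝ) : phaseProfile R v =
    -√(2 * ∫ z in min v (-1)..-1, -(3 * phaseProfile R z + R z)) := by
  have hint : Tendsto
      (fun n => ∫ z in min v (-1)..-1, -(3 * (phaseMap R)^[n] phaseSeed z + R z))
      atTop (𝓝 (∫ z in min v (-1)..-1, -(3 * phaseProfile R z + R z))) := by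
    refine intervalIntegral.tendsto_integral_filter_of_dominated_convergence
      (fun z => 3 * |phaseSeed z| + |R z|)
      (Eventually.of_forall fun n => Continuous.aestronglyMeasurable (by fun_prop))
      (Eventually.of_forall fun n => Eventually.of_forall fun z _ => ?_)
      (Continuous.intervalIntegrable (by fun_prop) _ _)
      (Eventually.of_forall fun z _ => ((tendsto_iterate hR z).const_mul 3 |>.add_const _).neg)
    have : |(phaseMap R)^[n] phaseSeed z| ≤ |phaseSeed z| :=
      abs_le_abs_of_nonpos (iterate_nonpos hR n z) (monotone_iterate hR n.zero_le z)
    rw [norm_neg, norm_eq_abs]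
    calc |3 * (phaseMap R)^[n] phaseSeed z + R z|
        ≤ |3 * (phaseMap R)^[n] phaseSeed z| + |R z| := abs_add_le _ _
      _ ≤ 3 * |phaseSeed z| + |R z| := by rw [abs_mul, abs_of_pos three_pos]; linarith
  have hsucc := (tendsto_iterate hR v).comp (tendsto_add_atTop_nat 1)
  simp only [Function.comp_def, Function.iterate_succ_apply'] at hsucc
  exact tendsto_nhds_unique hsucc
    ((continuous_sqrt.comp (continuous_const.mul continuous_id)).neg.tendsto _ |>.comp hint)

theorem continuous : Continuous (phaseProfile R) := by
  rw [funext (eq_neg_sqrt_integral hR)]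
  exact continuous_neg_sqrt_integral_min fun a b =>
    (((intervalIntegrable hR a b).const_mul 3).add (R.continuous.intervalIntegrable a b)).neg

end phaseProfile

theorem exists_fixedPt_phaseMap {R : C(ℝ, ℝ)} (hR : ∀ v ≤ -1, 4 * (v + 1) ≤ R v) :
    ∃ W : C(ℝ, ℝ), phaseSeed ≤ W ∧ W ≤ 0 ∧ phaseMap R W = W :=
  ⟨⟨phaseProfile R, phaseProfile.continuous hR⟩, phaseProfile.seed_le_apply hR,
    phaseProfile.apply_nonpos hR,
    ContinuousMap.ext fun v => (phaseProfile.eq_neg_sqrt_integral hR v).symm⟩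

theorem exists_bvp_solution {R : ℝ → ℝ} (hRc : Continuous R) (hR_neg : ∀ v < -1, R v < 0)
    (hR_ge : ∀ v ≤ -1, 4 * (v + 1) ≤ R v) :
    ∃ V : ℝ → ℝ,
      (∀ s : ℝ, DifferentiableAt ℝ V s ∧ DifferentiableAt ℝ (deriv V) s) ∧
      (∀ s : ℝ, deriv (deriv V) s - 3 * deriv V s = R (V s)) ∧
      (∀ s : ℝ, V s < -1 ∧ deriv V s < 0) ∧
      Tendsto V atBot (𝓝 (-1)) ∧
      Tendsto V atTop atBot := by
  obtain ⟨W, hW_ge, hW_nonpos, hW_fix⟩ := exists_fixedPt_phaseMap (R := ⟨R, hRc⟩) hR_ge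
  have hW_neg (v : ℝ) (hv : v < -1) : W v < 0 := by
    simpa only [hW_fix] using phaseMap.apply_neg (R := ⟨R, hRc⟩) hR_neg hW_nonpos hv
  have hW_deriv (v : ℝ) (hv : v < -1) : HasDerivAt W ((3 * W v + R v) / W v) v := by
    simpa only [hW_fix, ContinuousMap.coe_mk] using
      phaseMap.hasDerivAt (R := ⟨R, hRc⟩) hR_neg hW_nonpos hv
  obtain ⟨V, hV_lt, hV, hV_bot, hV_top⟩ := exists_solution_of_neg_of_le_mul_sub (c := 4)
    W.continuous.continuousOn hW_neg fun v hv => by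
      simpa [phaseSeed, min_eq_left hv.le] using hW_ge v
  have hV' : deriv V = W ∘ V := funext fun t => (hV t).deriv
  have hV'' (t : ℝ) : HasDerivAt (deriv V) (3 * W (V t) + R (V t)) t := by
    rw [hV']
    refine ((hW_deriv _ (hV_lt t)).comp t (hV t)).congr_deriv ?_
    field_simp [(hW_neg _ (hV_lt t)).ne]
  refine ⟨V, fun t => ⟨(hV t).differentiableAt, (hV'' t).differentiableAt⟩, fun t => ?_,
    fun t => ⟨hV_lt t, ?_⟩, hV_bot, hV_top⟩
  · rw [(hV'' t).deriv, hV', Function.comp_apply]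
    ring
  · rw [hV']
    exact hW_neg _ (hV_lt t)

/-- Existence of a solution of the two-point boundary value problem
`V'' - 3V' = R(V)` on `ℝ` with `V(-∞) = -1`, `V(+∞) = -∞`: there is a twice
differentiable `V : ℝ → ℝ` with `V(s) < -1` and `V'(s) < 0` for all `s`,
`V(s) → -1` as `s → -∞` and `V(s) → -∞` as `s → +∞`. -/
theorem existence_solution_bvp
    (Q R : ℝ → ℝ)
    (hQ : ∀ v : ℝ, v < -1 → Q v < 0 ∧ Q v - Real.exp (Q v) = v)
    (hR : ∀ v : ℝ, R v = if v < -1 then -2 * (1 - Real.exp (Q v)) ^ 2 else 4 * (v + 1)) :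
    ∃ V : ℝ → ℝ,
      (∀ s : ℝ, DifferentiableAt ℝ V s ∧ DifferentiableAt ℝ (deriv V) s) ∧
      (∀ s : ℝ, deriv (deriv V) s - 3 * deriv V s = R (V s)) ∧
      (∀ s : ℝ, V s < -1 ∧ deriv V s < 0) ∧
      Tendsto V atBot (nhds (-1)) ∧
      Tendsto V atTop atBot :=
  exists_bvp_solution (continuous_R hQ hR) (fun _ => R_neg hQ hR)
    (fun _ => four_mul_add_one_le_R hQ hR)
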